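/- arXiv:1602.03148 — 7 statements merged into one kernel-verified Lean document; each statement's English description precedes it below -/
import Mathlib

section
/- Let V be a valuation ring with fraction field F and residue field k. Then every V-submodule E of the d-fold direct sum F^d satisfies dim_k(E ⊗_V k) ≤ d. -/
/-!
Over a valuation ring (a local Bézout domain) torsion-free modules are flat, and over a local
ring any lift to a flat module `M` of a `k`-linearly independent family in `k ⊗ M` is linearly
independent. Hence `dim_k (k ⊗ E) ≤ rank_V E ≤ rank_V F^d = dim_F F^d = d`.
-/

open Module TensorProduct IsLocalRing

universe u v

theorem Module.Flat.of_isTorsionFree_of_isBezout {R M : Type*} [CommRing R] [IsDomain R]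
    [IsBezout R] [AddCommGroup M] [Module R M] [IsTorsionFree R M] : Flat R M :=
  Flat.flat_iff_torsion_eq_bot_of_isBezout.mpr (Submodule.isTorsionFree_iff_torsion_eq_bot.mp ‹_›)

theorem IsLocalRing.rank_residueField_tensor_le_of_flat {R : Type u} {M : Type v} [CommRing R]
    [IsLocalRing R] [AddCommGroup M] [Module R M] [Flat R M] :
    Module.rank (ResidueField R) (ResidueField R ⊗[R] M) ≤ Cardinal.lift.{u} (Module.rank R M) := by
  rw [Module.rank_def]
  refine ciSup_le' fun ⟨s, hs⟩ ↦ ?_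
  obtain ⟨lift, hlift⟩ : ∃ lift : s → M, TensorProduct.mk R (ResidueField R) M 1 ∘ lift = (↑) :=
    ⟨_, funext fun x ↦ (mk_surjective R M _ residue_surjective x).choose_spec⟩
  have := (linearIndependent_of_flat lift (by rwa [hlift])).cardinal_lift_le_rank
  rwa [Cardinal.lift_id'.{v, u}, Cardinal.lift_umax.{v, u}] at this

/-- Let `V` be a valuation ring with fraction field `F` and residue
field `k`. Then every `V`-submodule `E` of the `d`-fold direct sum `F^d` satisfies
`dim_k (E ⊗_V k) ≤ d`. -/
theorem statement_0
    (V : Type*) [CommRing V] [IsDomain V] [ValuationRing V]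
    (F : Type*) [Field F] [Algebra V F] [IsFractionRing V F]
    (d : ℕ) (E : Submodule V (Fin d → F)) :
    Module.rank (IsLocalRing.ResidueField V)
      (TensorProduct V (IsLocalRing.ResidueField V) E) ≤ (d : Cardinal) := by
  have : Flat V E := .of_isTorsionFree_of_isBezout
  calc Module.rank (ResidueField V) (ResidueField V ⊗[V] E)
      ≤ Cardinal.lift (Module.rank V E) := rank_residueField_tensor_le_of_flat
    _ ≤ Cardinal.lift (Module.rank V (Fin d → F)) := Cardinal.lift_le.mpr E.rank_le
    _ = d := by rw [← IsFractionRing.rank_right_eq V F]; simp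
end

section
/- Let V be a valuation ring which is not a field and whose maximal ideal 𝔪 satisfies 𝔪 = 𝔪², with fraction field F and residue field k. If D ⊆ F^d is a V-submodule with dim_k(D ⊗_V k) = d, then D is a free V-module of rank d. -/
/-!
Lift a basis of `k ⊗ D` to `e₁, …, e_d ∈ D`. Being torsion-free over the Bézout domain `V`,
`D` is flat, so the `eᵢ` are `V`-linearly independent and hence form an `F`-basis of `F^d`.
If some `z ∈ D` had an `F`-coordinate outside `V`, let `c` be its coordinate of largest
valuation: then `c⁻¹ ∈ 𝔪`, and `c⁻¹ • z ∈ 𝔪 D` is a `V`-combination of the `eᵢ` with a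
coefficient `1`, contradicting the independence of the `eᵢ` modulo `𝔪`. So the `eᵢ` span `D`.
-/

open IsLocalRing TensorProduct

theorem exists_linearIndependent_one_tmul_of_rank_eq {R M K : Type*} [CommRing R]
    [AddCommGroup M] [Module R M] [Field K] [Algebra R K] {n : ℕ}
    (h : Module.rank K (K ⊗[R] M) = n) :
    ∃ e : Fin n → M, LinearIndependent K (TensorProduct.mk R K M 1 ∘ e) := by
  obtain ⟨κ, a, -, hspan, hli⟩ := exists_linearIndependent' K (TensorProduct.mk R K M 1)
  have htop : Submodule.span K (Set.range (TensorProduct.mk R K M 1)) = ⊤ := by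
    simpa using (Submodule.baseChange_span (R := R) K (Set.univ : Set M)).symm
  have hκ : Cardinal.mk κ = n := by
    have := (Module.Basis.mk hli (by rw [hspan, htop])).mk_eq_rank
    rwa [h, Cardinal.lift_natCast, Cardinal.lift_eq_nat_iff] at this
  obtain ⟨σ⟩ := Cardinal.mk_eq_nat_iff.mp hκ
  exact ⟨a ∘ σ.symm, hli.comp _ σ.symm.injective⟩

theorem ValuationRing.exists_forall_eq_mul (A : Type*) [CommRing A] [IsDomain A]
    [ValuationRing A] {K : Type*} [Field K] [Algebra A K] [IsFractionRing A K]
    {ι : Type*} [Finite ι] [Nonempty ι] (c : ι → K) :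
    ∃ j, ∀ i, ∃ u : A, c i = algebraMap A K u * c j := by
  let v := ValuationRing.valuation A K
  obtain ⟨j, hj⟩ := Finite.exists_max (v ∘ c)
  refine ⟨j, fun i => ?_⟩
  by_cases hcj : c j = 0
  · refine ⟨0, ?_⟩
    simpa [hcj] using hj i
  · obtain ⟨u, hu⟩ := (mem_integer_iff A K (c i / c j)).mp <| by
      rw [Valuation.mem_integer_iff, map_div₀]
      exact div_le_one_of_le₀ (hj i) zero_le
    exact ⟨u, by rw [hu, div_mul_cancel₀ _ hcj]⟩

theorem IsLocalRing.mem_maximalIdeal_of_sum_smul_mem {R M : Type*} [CommRing R] [IsLocalRing R]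
    [AddCommGroup M] [Module R M] {ι : Type*} [Fintype ι] {e : ι → M}
    (he : LinearIndependent (ResidueField R) (TensorProduct.mk R (ResidueField R) M 1 ∘ e))
    {u : ι → R} (hu : ∑ i, u i • e i ∈ maximalIdeal R • (⊤ : Submodule R M)) (i : ι) :
    u i ∈ maximalIdeal R := by
  have h0 : TensorProduct.mk R (ResidueField R) M 1 (∑ i, u i • e i) = 0 :=
    (LinearMap.ker_tensorProductMk M).ge hu
  have h1 : ∑ i, residue R (u i) • (TensorProduct.mk R (ResidueField R) M 1 ∘ e) i = 0 := by
    simpa only [map_sum, map_smul, Function.comp_apply, ← ResidueField.algebraMap_eq,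
      algebraMap_smul] using h0
  rw [← residue_eq_zero_iff]
  exact Fintype.linearIndependent_iff.mp he _ h1 i

section ValuationRing

variable {V F W : Type*} [CommRing V] [IsDomain V] [ValuationRing V] [Field F] [Algebra V F]
  [IsFractionRing V F] [AddCommGroup W] [Module F W] [Module V W] [IsScalarTower V F W]
  {D : Submodule V W} {ι : Type*} [Fintype ι] {e : ι → D}

theorem Submodule.isInteger_of_coe_eq_sum_smul
    (he : LinearIndependent (ResidueField V) (TensorProduct.mk V (ResidueField V) D 1 ∘ e))
    {z : D} {c : ι → F} (hz : (z : W) = ∑ i, c i • (e i : W)) (i : ι) :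
    IsLocalization.IsInteger V (c i) := by
  have : Nonempty ι := ⟨i⟩
  obtain ⟨j, hj⟩ := ValuationRing.exists_forall_eq_mul V c
  choose u hu using hj
  suffices IsLocalization.IsInteger V (c j) by
    obtain ⟨r, hr⟩ := this
    exact ⟨u i * r, by rw [map_mul, hr, hu i]⟩
  by_contra hcj
  have hcj0 : c j ≠ 0 := fun h => hcj (h ▸ IsLocalization.isInteger_zero)
  obtain ⟨m, hm⟩ := (ValuationRing.isInteger_or_isInteger V (c j)).resolve_left hcj
  have hm𝔪 : m ∈ maximalIdeal V := by
    refine fun ⟨m', hm'⟩ => hcj ⟨(m'⁻¹ : Vˣ), ?_⟩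
    rw [← inv_inv (c j), ← hm, ← hm', ← map_units_inv]
  have hmz : ∑ i, u i • e i = m • z := by
    apply Subtype.ext
    rw [Submodule.coe_sum, Submodule.coe_smul, ← algebraMap_smul F m (z : W), hm, hz,
      Finset.smul_sum]
    refine Finset.sum_congr rfl fun i _ => ?_
    rw [Submodule.coe_smul, ← algebraMap_smul F (u i), smul_smul, hu i, mul_comm _ (c j),
      inv_mul_cancel_left₀ hcj0]
  have huj : u j ∈ maximalIdeal V :=
    IsLocalRing.mem_maximalIdeal_of_sum_smul_mem he (hmz ▸ Submodule.smul_mem_smul hm𝔪 trivial) j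
  have : u j = 1 := IsFractionRing.injective V F <| by
    rw [map_one, ← mul_eq_right₀ hcj0, ← hu j]
  exact (maximalIdeal.isMaximal V).ne_top ((Ideal.eq_top_iff_one _).mpr (this ▸ huj))

theorem Submodule.nonempty_basis_of_rank_residueField_tensorProduct [FiniteDimensional F W]
    {n : ℕ} (hW : Module.finrank F W = n)
    (hD : Module.rank (ResidueField V) (ResidueField V ⊗[V] D) = n) :
    Nonempty (Module.Basis (Fin n) V D) := by
  obtain ⟨e, he⟩ := exists_linearIndependent_one_tmul_of_rank_eq hD
  have : Module.IsTorsionFree V W := .trans_faithfulSMul V F W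
  have : Module.Flat V D := by
    rw [Module.Flat.flat_iff_torsion_eq_bot_of_isBezout,
      ← Submodule.isTorsionFree_iff_torsion_eq_bot]
    infer_instance
  have hli : LinearIndependent V e := Module.IsLocalRing.linearIndependent_of_flat e he
  have hliF : LinearIndependent F (D.subtype ∘ e) :=
    (LinearIndependent.iff_fractionRing V F).mp (hli.map' D.subtype D.ker_subtype)
  have hspanF := hliF.span_eq_top_of_card_eq_finrank' (by simp [hW])
  refine ⟨.mk hli fun z _ => ?_⟩
  obtain ⟨c, hc⟩ := (Submodule.mem_span_range_iff_exists_fun F).mp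
    (hspanF ▸ Submodule.mem_top : (z : W) ∈ Submodule.span F _)
  choose w hw using Submodule.isInteger_of_coe_eq_sum_smul he hc.symm
  refine (Submodule.mem_span_range_iff_exists_fun V).mpr ⟨w, Subtype.ext ?_⟩
  simp only [Submodule.coe_sum, Submodule.coe_smul, ← algebraMap_smul F (w _), hw, ← hc,
    Function.comp_apply, Submodule.subtype_apply]

end ValuationRing

theorem statement_1_general
    (V : Type*) [CommRing V] [IsDomain V] [ValuationRing V]
    (F : Type*) [Field F] [Algebra V F] [IsFractionRing V F]
    (d : ℕ) (D : Submodule V (Fin d → F))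
    (hD : Module.rank (IsLocalRing.ResidueField V)
      (TensorProduct V (IsLocalRing.ResidueField V) D) = (d : Cardinal)) :
    Nonempty (D ≃ₗ[V] (Fin d → V)) := by
  obtain ⟨b⟩ := D.nonempty_basis_of_rank_residueField_tensorProduct (F := F)
    (Module.finrank_fin_fun F) hD
  exact ⟨b.equivFun⟩

/-- Let `V` be a valuation ring which is not a field and whose maximal
ideal `𝔪` satisfies `𝔪 = 𝔪²`, with fraction field `F` and residue field `k`.  If
`D ⊆ F^d` is a `V`-submodule with `dim_k (D ⊗_V k) = d`, then `D` is a free `V`-module of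
rank `d`. -/
theorem statement_1
    (V : Type*) [CommRing V] [IsDomain V] [ValuationRing V]
    (hV : ¬ IsField V)
    (hm : IsLocalRing.maximalIdeal V = (IsLocalRing.maximalIdeal V) ^ 2)
    (F : Type*) [Field F] [Algebra V F] [IsFractionRing V F]
    (d : ℕ) (D : Submodule V (Fin d → F))
    (hD : Module.rank (IsLocalRing.ResidueField V)
      (TensorProduct V (IsLocalRing.ResidueField V) D) = (d : Cardinal)) :
    Nonempty (D ≃ₗ[V] (Fin d → V)) :=
  statement_1_general V F d D hD
end

section
/- Let p be a prime and let A → B be a ring homomorphism such that A and B are p-adically complete and p-torsion-free, A is Noetherian, and the induced map A/pA → B/pB is flat. Then A → B is flat. -/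
/-!
By the equational criterion, `B` is flat over `A` once every solution `b ∈ Bˡ` of a relation
`∑ aᵢ bᵢ = 0` with `aᵢ ∈ A` is a `B`-combination of solutions in `Aˡ`. Flatness modulo `ϖ = p`
and `p`-torsion-freeness of `B` give this modulo every power `ϖⁿ` (induction on `n`, applying
flatness modulo `ϖ` to an augmented relation). Artin–Rees for the ideal `(a₁, …, aₗ)` turns
solutions modulo `ϖᵏ⁺¹` into exact solutions modulo `ϖ`, so the module `S` of solutions in `Bˡ`
satisfies `S ⊆ L + ϖ S`, where `L` is the image of `Bᴺ` under a generating matrix of the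
(finitely generated, `A` being Noetherian) module of solutions in `Aˡ`. Completeness of `B` then
forces `S ⊆ L`.
-/

open Matrix

section AdicPi

variable {R M : Type*} [CommRing R] [AddCommGroup M] [Module R M] {ι : Type*} [Finite ι]

theorem Submodule.mem_smul_top_pi_iff (I : Ideal R) (x : ι → M) :
    x ∈ (I • ⊤ : Submodule R (ι → M)) ↔ ∀ i, x i ∈ (I • ⊤ : Submodule R M) := by
  classical
  cases nonempty_fintype ι
  refine ⟨fun hx i => ?_, fun hx => ?_⟩
  · have := Submodule.mem_map_of_mem (f := LinearMap.proj (R := R) (φ := fun _ : ι => M) i) hx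
    rw [Submodule.map_smul''] at this
    exact Submodule.smul_mono le_rfl le_top this
  · rw [← Finset.univ_sum_single x]
    refine Submodule.sum_mem _ fun i _ => ?_
    have := Submodule.mem_map_of_mem (f := LinearMap.single R (fun _ : ι => M) i) (hx i)
    rw [Submodule.map_smul''] at this
    exact Submodule.smul_mono le_rfl le_top this

instance IsHausdorff.pi (I : Ideal R) [IsHausdorff I M] : IsHausdorff I (ι → M) :=
  ⟨fun x hx => _root_.funext fun i => IsHausdorff.haus ‹_› (x i) fun n => by
    rw [SModEq.zero]
    exact (Submodule.mem_smul_top_pi_iff _ x).mp (SModEq.zero.mp (hx n)) i⟩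

instance IsPrecomplete.pi (I : Ideal R) [IsPrecomplete I M] : IsPrecomplete I (ι → M) := by
  refine ⟨fun f hf => ?_⟩
  have hcoord (i : ι) : ∃ L : M, ∀ n, f n i ≡ L [SMOD (I ^ n • ⊤ : Submodule R M)] :=
    IsPrecomplete.prec ‹_› fun hmn => SModEq.sub_mem.mpr <|
      (Submodule.mem_smul_top_pi_iff _ _).mp (SModEq.sub_mem.mp (hf hmn)) i
  choose L hL using hcoord
  exact ⟨L, fun n => SModEq.sub_mem.mpr <|
    (Submodule.mem_smul_top_pi_iff _ _).mpr fun i => SModEq.sub_mem.mp (hL i n)⟩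

end AdicPi

theorem LinearMap.le_range_of_le_range_sup_smul {R P M : Type*} [CommRing R] [AddCommGroup P]
    [Module R P] [AddCommGroup M] [Module R M] (I : Ideal R) [IsPrecomplete I P] [IsHausdorff I M]
    (g : P →ₗ[R] M) {N : Submodule R M} (h : N ≤ LinearMap.range g ⊔ I • N) :
    N ≤ LinearMap.range g := by
  have hstep (n : ℕ) : I ^ n • N ≤ (I ^ n • ⊤ : Submodule R P).map g ⊔ I ^ (n + 1) • N :=
    calc I ^ n • N ≤ I ^ n • (LinearMap.range g ⊔ I • N) := Submodule.smul_mono le_rfl h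
      _ = (I ^ n • ⊤ : Submodule R P).map g ⊔ I ^ (n + 1) • N := by
        rw [Submodule.smul_sup, LinearMap.range_eq_map, Submodule.map_smul'', ← Submodule.mul_smul,
          ← pow_succ]
  intro m hm
  have hnext (n : ℕ) (x : P) (hx : m - g x ∈ I ^ n • N) :
      ∃ x', m - g x' ∈ I ^ (n + 1) • N ∧ x' - x ∈ (I ^ n • ⊤ : Submodule R P) := by
    obtain ⟨_, ⟨u, hu, rfl⟩, z, hz, hyz⟩ := Submodule.mem_sup.mp (hstep n hx)
    refine ⟨x + u, ?_, by rwa [add_sub_cancel_left]⟩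
    rwa [map_add, ← sub_sub, ← hyz, add_sub_cancel_left]
  choose next hnext hdiff using hnext
  let seq (n : ℕ) : {x : P // m - g x ∈ I ^ n • N} :=
    Nat.rec ⟨0, by simpa using hm⟩ (fun n x => ⟨next n x x.2, hnext n x x.2⟩) n
  obtain ⟨L, hL⟩ := IsPrecomplete.prec ‹_› <|
    (AdicCompletion.isAdicCauchy_iff I P fun n => (seq n).1).mpr
      fun n => SModEq.sub_mem.mpr <| by simpa using Submodule.neg_mem _ (hdiff n _ (seq n).2)
  refine ⟨L, (sub_eq_zero.mp (IsHausdorff.haus ‹_› _ fun n => SModEq.zero.mpr ?_)).symm⟩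
  rw [← sub_add_sub_cancel m (g (seq n).1), ← map_sub]
  exact Submodule.add_mem _ (Submodule.smul_mono le_rfl le_top (seq n).2)
    ((Submodule.map_smul'' _ _ g).le ⟨_, SModEq.sub_mem.mp (hL n), rfl⟩ |>
      Submodule.smul_mono le_rfl le_top)

theorem Ideal.exists_pow_succ_inf_le_mul {R : Type*} [CommRing R] [IsNoetherianRing R]
    (I J : Ideal R) : ∃ k, I ^ (k + 1) ⊓ J ≤ I * J := by
  obtain ⟨k, hk⟩ := I.exists_pow_inf_eq_pow_smul J
  refine ⟨k, ?_⟩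
  have := hk (k + 1) k.le_succ
  simp only [smul_eq_mul, Ideal.mul_top, add_tsub_cancel_left, pow_one] at this
  rw [this]
  exact Ideal.mul_mono_right inf_le_right

section ModPow

variable {A B : Type*} [CommRing A] [CommRing B]

/-- The analogue of `Module.IsTrivialRelation` for the congruence `∑ aᵢ bᵢ ≡ 0 [mod ϖ ^ n]`:
`b` is, up to `ϖ ^ n`, a `B`-combination of columns of `x`, which solve `a` modulo `ϖ ^ n`. -/
def IsTrivialRelationModPow (f : A →+* B) (ϖ : A) (n : ℕ) {ι : Type*} [Fintype ι] (a : ι → A)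
    (b : ι → B) : Prop :=
  ∃ (κ : Type) (_ : Fintype κ) (x : Matrix ι κ A) (e : κ → A) (y : κ → B) (d : ι → B),
    a ᵥ* x = ϖ ^ n • e ∧ b = x.map f *ᵥ y + f ϖ ^ n • d

/-- Flatness of `B ⧸ f ϖ` over `A ⧸ ϖ`, in the form of the equational criterion. -/
def IsFlatModulo (f : A →+* B) (ϖ : A) : Prop :=
  ∀ {ι : Type} [Fintype ι] (a : ι → A) (b : ι → B),
    f ϖ ∣ (f ∘ a) ⬝ᵥ b → IsTrivialRelationModPow f ϖ 1 a b

variable {f : A →+* B} {ϖ : A} {ι : Type} [Fintype ι]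

theorem RingHom.comp_vecMul {κ : Type*} (a : ι → A) (x : Matrix ι κ A) :
    f ∘ (a ᵥ* x) = (f ∘ a) ᵥ* x.map f :=
  funext (f.map_vecMul x a)

theorem RingHom.comp_smul {κ : Type*} (r : A) (e : κ → A) : f ∘ (r • e) = f r • (f ∘ e) := by
  ext
  simp

theorem Matrix.map_smul_ringHom {m n : Type*} (r : A) (x : Matrix m n A) :
    (r • x).map f = f r • x.map f :=
  Matrix.map_smulₛₗ f f r (map_mul f r) x

theorem IsTrivialRelationModPow.succ (hreg : IsLeftRegular (f ϖ)) (hflat : IsFlatModulo f ϖ)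
    {n : ℕ} {a : ι → A} {b : ι → B} (hn : IsTrivialRelationModPow f ϖ n a b)
    (hdvd : f ϖ ^ (n + 1) ∣ (f ∘ a) ⬝ᵥ b) : IsTrivialRelationModPow f ϖ (n + 1) a b := by
  obtain ⟨κ, _, x, e, y, d, hx, hb⟩ := hn
  have hab : (f ∘ a) ⬝ᵥ b = f ϖ ^ n * ((f ∘ e) ⬝ᵥ y + (f ∘ a) ⬝ᵥ d) := by
    rw [hb, dotProduct_add, dotProduct_mulVec, ← RingHom.comp_vecMul, hx, RingHom.comp_smul,
      smul_dotProduct, dotProduct_smul, map_pow, smul_eq_mul, smul_eq_mul, mul_add]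
  -- Cancelling `f ϖ ^ n`, the pair `(y, d)` solves the augmented relation `(e, a)` modulo `ϖ`.
  have haug : f ϖ ∣ (f ∘ Sum.elim e a) ⬝ᵥ Sum.elim y d := by
    obtain ⟨c, hc⟩ := hdvd
    rw [hab, pow_succ, mul_assoc] at hc
    rw [Sum.comp_elim, sumElim_dotProduct_sumElim]
    exact ⟨c, (hreg.pow n) hc⟩
  obtain ⟨κ', _, u, e', w, d', hu, hyd⟩ := hflat _ _ haug
  rw [pow_one] at hu hyd
  have hy : y = u.toRows₁.map f *ᵥ w + f ϖ • (d' ∘ Sum.inl) :=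
    funext fun j => congrFun hyd (Sum.inl j)
  have hd : d = u.toRows₂.map f *ᵥ w + f ϖ • (d' ∘ Sum.inr) :=
    funext fun i => congrFun hyd (Sum.inr i)
  rw [← fromRows_toRows u, sumElim_vecMul_fromRows] at hu
  refine ⟨κ' ⊕ κ, inferInstance, fromCols (x * u.toRows₁ + ϖ ^ n • u.toRows₂) (ϖ • x),
    Sum.elim e' e, Sum.elim w (d' ∘ Sum.inl), d' ∘ Sum.inr, ?_, ?_⟩
  · rw [vecMul_fromCols, vecMul_add, ← vecMul_vecMul, hx, vecMul_smul, smul_vecMul, ← smul_add,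
      hu, vecMul_smul, hx, smul_smul, smul_smul, ← pow_succ, ← pow_succ']
    ext (_ | _) <;> rfl
  · rw [hb, hy, hd, fromCols_map, fromCols_mulVec_sumElim, Matrix.map_add f (map_add f),
      Matrix.map_mul, Matrix.map_smul_ringHom, Matrix.map_smul_ringHom, map_pow]
    simp only [mulVec_add, ← mulVec_mulVec, mulVec_smul, add_mulVec, smul_mulVec, smul_add,
      smul_smul, ← pow_succ]
    abel

theorem isTrivialRelationModPow_of_dvd (hreg : IsLeftRegular (f ϖ)) (hflat : IsFlatModulo f ϖ)
    (n : ℕ) {a : ι → A} {b : ι → B} (h : f ϖ ^ n ∣ (f ∘ a) ⬝ᵥ b) :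
    IsTrivialRelationModPow f ϖ n a b := by
  induction n with
  | zero => exact ⟨Empty, inferInstance, 0, 0, 0, b, by simp, by simp⟩
  | succ n ih => exact (ih (dvd_trans (pow_dvd_pow _ n.le_succ) h)).succ hreg hflat h

theorem exists_eq_mulVec_add_of_dotProduct_eq_zero [IsNoetherianRing A]
    (hreg : IsLeftRegular (f ϖ)) (hflat : IsFlatModulo f ϖ) {a : ι → A} {b : ι → B}
    (hab : (f ∘ a) ⬝ᵥ b = 0) :
    ∃ (κ : Type) (_ : Fintype κ) (x : Matrix ι κ A) (y : κ → B) (d : ι → B),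
      a ᵥ* x = 0 ∧ b = x.map f *ᵥ y + f ϖ • d := by
  obtain ⟨k, hk⟩ := Ideal.exists_pow_succ_inf_le_mul (Ideal.span {ϖ})
    (LinearMap.range (dotProductBilin A A a))
  obtain ⟨κ, _, x, e, y, d, hx, hb⟩ :=
    isTrivialRelationModPow_of_dvd hreg hflat (k + 1) (a := a) (by rw [hab]; exact dvd_zero _)
  -- By Artin–Rees, `a ⬝ᵥ xⱼ` lies in `ϖ • (a₁, …, aₗ)`, so `xⱼ - ϖ zⱼ` is an exact solution.
  have hcol (j : κ) : ∃ z : ι → A, (a ᵥ* x) j = ϖ * (a ⬝ᵥ z) := by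
    have hmem : (a ᵥ* x) j ∈ Ideal.span {ϖ} ^ (k + 1) ⊓ LinearMap.range (dotProductBilin A A a) :=
      ⟨Ideal.span_singleton_pow ϖ (k + 1) ▸ Ideal.mem_span_singleton'.mpr ⟨e j, by
        rw [hx, Pi.smul_apply, smul_eq_mul, mul_comm]⟩, fun i => x i j, rfl⟩
    obtain ⟨_, ⟨z, rfl⟩, hz⟩ := Ideal.mem_span_singleton_mul.mp (hk hmem)
    exact ⟨z, hz.symm⟩
  choose z hz using hcol
  let Z : Matrix ι κ A := Matrix.of fun i j => z j i
  refine ⟨κ, ‹_›, x - ϖ • Z, y, Z.map f *ᵥ y + f ϖ ^ k • d, ?_, ?_⟩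
  · ext j
    simp only [vecMul_sub, vecMul_smul, Pi.sub_apply, Pi.smul_apply, smul_eq_mul, hz]
    exact sub_self _
  · rw [hb, Matrix.map_sub f (map_sub f), Matrix.map_smul_ringHom, sub_mulVec, smul_mulVec,
      smul_add, smul_smul, ← pow_succ']
    abel

end ModPow

theorem isFlatModulo_of_flat_quotient {A B : Type*} [CommRing A] [CommRing B] (f : A →+* B)
    (ϖ : A) (π : B) (hπ : f ϖ = π) [Algebra (A ⧸ Ideal.span {ϖ}) (B ⧸ Ideal.span {π})]
    (halg : ∀ a : A, algebraMap (A ⧸ Ideal.span {ϖ}) (B ⧸ Ideal.span {π})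
      (Ideal.Quotient.mk _ a) = Ideal.Quotient.mk _ (f a))
    [Module.Flat (A ⧸ Ideal.span {ϖ}) (B ⧸ Ideal.span {π})] : IsFlatModulo f ϖ := by
  subst hπ
  intro ι _ a b hab
  have hrel : ∑ i, Ideal.Quotient.mk (Ideal.span {ϖ}) (a i) •
      Ideal.Quotient.mk (Ideal.span {f ϖ}) (b i) = 0 := by
    simp only [Algebra.smul_def, halg, ← map_mul, ← map_sum, Ideal.Quotient.eq_zero_iff_mem,
      Ideal.mem_span_singleton]
    exact hab
  have htriv := Module.Flat.isTrivialRelation_of_sum_smul_eq_zero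
    (R := A ⧸ Ideal.span {ϖ}) (M := B ⧸ Ideal.span {f ϖ}) hrel
  obtain ⟨k, x, y, hb, hx⟩ := htriv
  choose x hx' using fun i j => Ideal.Quotient.mk_surjective (x i j)
  choose y hy' using fun j => Ideal.Quotient.mk_surjective (y j)
  simp only [← hx', ← hy'] at hb hx
  have he (j : Fin k) : ϖ ∣ (a ᵥ* Matrix.of x) j := by
    rw [← Ideal.mem_span_singleton, ← Ideal.Quotient.eq_zero_iff_mem]
    simpa [vecMul, dotProduct] using hx j
  have hd (i : ι) : f ϖ ∣ b i - ((Matrix.of x).map f *ᵥ y) i := by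
    rw [← Ideal.mem_span_singleton, ← Ideal.Quotient.eq_zero_iff_mem]
    simp [mulVec, dotProduct, hb i, Algebra.smul_def, halg]
  choose e he using he
  choose d hd using hd
  refine ⟨Fin k, inferInstance, Matrix.of x, e, y, d, funext fun j => by simp [he j], ?_⟩
  funext i
  simp [← hd i]

theorem Module.Flat.of_isFlatModulo {A B : Type*} [CommRing A] [CommRing B] [Algebra A B]
    [IsNoetherianRing A] (ϖ : A) [IsHausdorff (Ideal.span {ϖ}) B]
    [IsPrecomplete (Ideal.span {ϖ}) B] (hreg : IsLeftRegular (algebraMap A B ϖ))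
    (hflat : IsFlatModulo (algebraMap A B) ϖ) : Module.Flat A B := by
  refine Module.Flat.of_forall_isTrivialRelation fun {l a b} hab => ?_
  obtain ⟨N, s, hs⟩ := Submodule.fg_iff_exists_fin_generating_family.mp
    (IsNoetherian.noetherian (LinearMap.ker (dotProductBilin A A a)))
  let g : Matrix (Fin l) (Fin N) A := Matrix.of fun i j => s j i
  have hg : LinearMap.range g.mulVecLin = LinearMap.ker (dotProductBilin A A a) := by
    rw [Matrix.range_mulVecLin]; exact hs
  have hag : a ᵥ* g = 0 := funext fun j =>
    (hs ▸ Submodule.subset_span ⟨j, rfl⟩ : s j ∈ LinearMap.ker (dotProductBilin A A a))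
  let G : (Fin N → B) →ₗ[A] (Fin l → B) := mulVecBilin B A (g.map (algebraMap A B))
  let S : Submodule A (Fin l → B) := LinearMap.ker (dotProductBilin B A (algebraMap A B ∘ a))
  have hS : S ≤ LinearMap.range G ⊔ Ideal.span {ϖ} • S := by
    intro b (hb : (algebraMap A B ∘ a) ⬝ᵥ b = 0)
    obtain ⟨κ, _, x, y, d, hx, rfl⟩ := exists_eq_mulVec_add_of_dotProduct_eq_zero hreg hflat hb
    have hcol (j : κ) : (fun i => x i j) ∈ LinearMap.range g.mulVecLin := hg ▸ congrFun hx j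
    choose α hα using hcol
    have hxg : x = g * Matrix.of fun k j => α j k := by
      ext i j
      exact (congrFun (hα j) i).symm
    refine Submodule.add_mem_sup
      ⟨(Matrix.of fun k j => α j k).map (algebraMap A B) *ᵥ y, by simp [G, hxg, Matrix.map_mul]⟩ ?_
    have hd : (algebraMap A B ∘ a) ⬝ᵥ d = 0 := by
      rw [dotProduct_add, dotProduct_mulVec, ← RingHom.comp_vecMul, hx, dotProduct_smul] at hb
      simpa [hreg.mul_left_eq_zero_iff] using hb
    rw [algebraMap_smul]
    exact Submodule.smul_mem_smul (Ideal.mem_span_singleton_self ϖ) hd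
  obtain ⟨w, hw⟩ := LinearMap.le_range_of_le_range_sup_smul _ G hS
    (show (algebraMap A B ∘ a) ⬝ᵥ b = 0 by simpa [dotProduct, Algebra.smul_def] using hab)
  refine ⟨N, g, w, fun i => ?_, fun j => congrFun hag j⟩
  rw [← hw]
  simp [G, mulVec, dotProduct, Algebra.smul_def]

theorem statement_7_general
    (p : ℕ)
    (A B : Type*) [CommRing A] [CommRing B] [Algebra A B]
    [IsAdicComplete (Ideal.span {(p : B)}) B]
    (hBtf : ∀ b : B, (p : B) * b = 0 → b = 0)
    [IsNoetherianRing A]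
    [Algebra (A ⧸ Ideal.span {(p : A)}) (B ⧸ Ideal.span {(p : B)})]
    (halg : ∀ a : A,
      algebraMap (A ⧸ Ideal.span {(p : A)}) (B ⧸ Ideal.span {(p : B)})
          (Ideal.Quotient.mk _ a)
        = Ideal.Quotient.mk _ (algebraMap A B a))
    (hflat : Module.Flat (A ⧸ Ideal.span {(p : A)}) (B ⧸ Ideal.span {(p : B)})) :
    Module.Flat A B := by
  have hp : algebraMap A B p = p := map_natCast _ p
  have hI : (Ideal.span {(p : A)}).map (algebraMap A B) = Ideal.span {(p : B)} := by
    rw [Ideal.map_span, Set.image_singleton, hp]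
  have : IsHausdorff (Ideal.span {(p : A)}) B := by
    rw [← IsHausdorff.map_algebraMap_iff (S := B), hI]; infer_instance
  have : IsPrecomplete (Ideal.span {(p : A)}) B := by
    rw [← IsPrecomplete.map_algebraMap_iff (S := B), hI]; infer_instance
  exact Module.Flat.of_isFlatModulo (p : A)
    (hp ▸ isLeftRegular_iff_right_eq_zero_of_mul.mpr hBtf)
    (isFlatModulo_of_flat_quotient _ _ _ hp halg)

/-- Let `p` be a prime and let `A → B` be a ring homomorphism such
that `A` and `B` are `p`-adically complete and `p`-torsion-free, `A` is Noetherian, and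
the induced map `A/pA → B/pB` is flat.  Then `A → B` is flat.

(The algebra structure of `B ⧸ pB` over `A ⧸ pA` is pinned down by the hypothesis
`halg` to be the one induced by `A → B`.) -/
theorem statement_7
    (p : ℕ) (hp : p.Prime)
    (A B : Type*) [CommRing A] [CommRing B] [Algebra A B]
    [IsAdicComplete (Ideal.span {(p : A)}) A]
    [IsAdicComplete (Ideal.span {(p : B)}) B]
    (hAtf : ∀ a : A, (p : A) * a = 0 → a = 0)
    (hBtf : ∀ b : B, (p : B) * b = 0 → b = 0)
    [IsNoetherianRing A]
    [Algebra (A ⧸ Ideal.span {(p : A)}) (B ⧸ Ideal.span {(p : B)})]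
    (halg : ∀ a : A,
      algebraMap (A ⧸ Ideal.span {(p : A)}) (B ⧸ Ideal.span {(p : B)})
          (Ideal.Quotient.mk _ a)
        = Ideal.Quotient.mk _ (algebraMap A B a))
    (hflat : Module.Flat (A ⧸ Ideal.span {(p : A)}) (B ⧸ Ideal.span {(p : B)})) :
    Module.Flat A B :=
  statement_7_general p A B hBtf halg hflat
end

section
/- Let S → R be a surjective ring homomorphism whose kernel I satisfies I² = 0. If R is coherent and I is finitely presented as an R-module, then S is coherent. -/
/-!
Call a module *good* (`Module.FGSubmodulesFinitelyPresented`) if its finitely generated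
submodules are finitely presented. Good modules are closed under extensions, finite products and
quotients by finitely generated submodules, so over the coherent ring `R` every finitely presented
module, in particular `I`, is good. As `I` is finitely generated, `R = S ⧸ I` is a finitely
presented `S`-module, and along such a surjection goodness descends from `R`-modules to
`S`-modules. Hence `I` and `R` are good `S`-modules, and so is their extension `S`.
-/

/-- A commutative ring is *coherent* if every finitely generated ideal is finitely
presented as a module. -/
def IsCoherentRing (R : Type*) [CommRing R] : Prop :=
  ∀ I : Ideal R, I.FG → Module.FinitePresentation R I

def Module.FGSubmodulesFinitelyPresented (R : Type*) [Ring R] (M : Type*) [AddCommGroup M]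
    [Module R M] : Prop :=
  ∀ N : Submodule R M, N.FG → Module.FinitePresentation R N

namespace Module.FGSubmodulesFinitelyPresented

variable {R M M' M'' : Type*} [Ring R] [AddCommGroup M] [Module R M] [AddCommGroup M']
  [Module R M'] [AddCommGroup M''] [Module R M'']

theorem of_subsingleton [Subsingleton M] : FGSubmodulesFinitelyPresented R M :=
  fun _ _ ↦ inferInstance

theorem of_equiv (e : M ≃ₗ[R] M') (h : FGSubmodulesFinitelyPresented R M) :
    FGSubmodulesFinitelyPresented R M' := by
  intro N hN
  have := h _ (hN.map e.symm.toLinearMap)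
  exact .of_equiv (e.symm.submoduleMap N).symm

theorem of_exact (i : M' →ₗ[R] M) (g : M →ₗ[R] M'') (hi : Function.Injective i)
    (hig : Function.Exact i g) (h' : FGSubmodulesFinitelyPresented R M')
    (h'' : FGSubmodulesFinitelyPresented R M'') : FGSubmodulesFinitelyPresented R M := by
  intro N hN
  have : Module.Finite R N := .of_fg hN
  have : Module.FinitePresentation R (N.map g) := h'' _ (hN.map g)
  let φ := g.submoduleMap N
  have hφ : Function.Surjective φ := g.submoduleMap_surjective N
  have : Module.Finite R (LinearMap.ker φ) := .of_fg (FinitePresentation.fg_ker φ hφ)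
  let χ : N.comap i →ₗ[R] LinearMap.ker φ :=
    LinearMap.codRestrict _ (i.restrict fun _ hx ↦ hx) fun x ↦
      Subtype.ext (hig.apply_apply_eq_zero x)
  have hχ : Function.Bijective χ := by
    refine ⟨fun x y hxy ↦ Subtype.ext (hi (congrArg (fun z : LinearMap.ker φ ↦ (z : M)) hxy)), ?_⟩
    rintro ⟨⟨y, hyN⟩, hy⟩
    obtain ⟨x, rfl⟩ := (hig y).mp (congrArg Subtype.val hy)
    exact ⟨⟨x, hyN⟩, rfl⟩
  let e := LinearEquiv.ofBijective χ hχ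
  have : Module.Finite R (N.comap i) := .equiv e.symm
  have : Module.FinitePresentation R (N.comap i) := h' _ (Module.Finite.iff_fg.mp this)
  have : Module.FinitePresentation R (LinearMap.ker φ) := .of_equiv e
  exact finitePresentation_of_ker φ hφ

theorem prod (h : FGSubmodulesFinitelyPresented R M) (h' : FGSubmodulesFinitelyPresented R M') :
    FGSubmodulesFinitelyPresented R (M × M') :=
  of_exact (.inl R M M') (.snd R M M') LinearMap.inl_injective .inl_snd h h'

theorem pi {ι : Type*} [Finite ι] (N : ι → Type*) [∀ i, AddCommGroup (N i)] [∀ i, Module R (N i)]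
    (h : ∀ i, FGSubmodulesFinitelyPresented R (N i)) :
    FGSubmodulesFinitelyPresented R (∀ i, N i) :=
  Module.pi_induction' R (motive := FGSubmodulesFinitelyPresented R)
    (motive' := FGSubmodulesFinitelyPresented R) of_equiv of_equiv of_subsingleton prod N h

theorem of_surjective (p : M →ₗ[R] M') (hp : Function.Surjective p)
    (hker : (LinearMap.ker p).FG) (h : FGSubmodulesFinitelyPresented R M) :
    FGSubmodulesFinitelyPresented R M' := by
  intro N hN
  have hle : LinearMap.ker p ≤ N.comap p := LinearMap.ker_le_comap p
  have : Module.FinitePresentation R (N.comap p) := h _ <|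
    Submodule.fg_of_fg_map_of_fg_inf_ker p (by rwa [Submodule.map_comap_eq_of_surjective hp])
      (by rwa [inf_eq_right.mpr hle])
  let ψ : N.comap p →ₗ[R] N := p.restrict fun _ hx ↦ hx
  refine finitePresentation_of_surjective ψ ?_ ?_
  · rintro ⟨y, hy⟩
    obtain ⟨x, rfl⟩ := hp y
    exact ⟨⟨x, hy⟩, rfl⟩
  · refine Submodule.fg_of_fg_map_injective _ (N.comap p).injective_subtype ?_
    rwa [LinearMap.ker_restrict, Submodule.map_comap_subtype, inf_eq_right.mpr hle]

theorem restrictScalars {S R M : Type*} [CommRing S] [CommRing R] [Algebra S R] [AddCommGroup M]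
    [Module R M] [Module S M] [IsScalarTower S R M] (hsurj : Function.Surjective (algebraMap S R))
    [Module.FinitePresentation S R] (h : FGSubmodulesFinitelyPresented R M) :
    FGSubmodulesFinitelyPresented S M := by
  rintro N ⟨s, rfl⟩
  have : Module.FinitePresentation R (Submodule.span R (s : Set M)) := h _ ⟨s, rfl⟩
  have := Module.FinitePresentation.trans S (Submodule.span R (s : Set M)) R
  rw [← Submodule.restrictScalars_span S R hsurj]
  exact this

end Module.FGSubmodulesFinitelyPresented

theorem IsCoherentRing.fgSubmodulesFinitelyPresented {R M : Type*} [CommRing R] [AddCommGroup M]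
    [Module R M] [Module.FinitePresentation R M] (hR : IsCoherentRing R) :
    Module.FGSubmodulesFinitelyPresented R M := by
  obtain ⟨n, p, hp⟩ := Module.Finite.exists_fin' R M
  exact .of_surjective p hp (Module.FinitePresentation.fg_ker p hp) (.pi _ fun _ ↦ hR)

theorem statement_8_general
    (S R : Type*) [CommRing S] [CommRing R]
    (f : S →+* R) (hf : Function.Surjective f)
    [Module R (RingHom.ker f)]
    (hcompat : ∀ (s : S) (x : RingHom.ker f), f s • x = s • x)
    (hR : IsCoherentRing R)
    (hker : Module.FinitePresentation R (RingHom.ker f)) :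
    IsCoherentRing S := by
  let _ := f.toAlgebra
  have htower : IsScalarTower S R (RingHom.ker f) :=
    ⟨fun s r x ↦ by rw [Algebra.smul_def, mul_smul, ← hcompat]; rfl⟩
  have : Module.Finite S R := .of_surjective (Algebra.linearMap S R) hf
  have hI : (RingHom.ker f).FG := Module.Finite.iff_fg.mp (Module.Finite.trans R (RingHom.ker f))
  have : Module.FinitePresentation S R :=
    Module.finitePresentation_of_surjective (Algebra.linearMap S R) hf hI
  exact Module.FGSubmodulesFinitelyPresented.of_exact _ _ (RingHom.ker f).injective_subtype
    (LinearMap.exact_subtype_ker_map (Algebra.linearMap S R))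
    (hR.fgSubmodulesFinitelyPresented.restrictScalars hf) (.restrictScalars hf hR)

/-- Let `S → R` be a surjective ring homomorphism whose kernel `I`
satisfies `I² = 0`.  If `R` is coherent and `I` is finitely presented as an `R`-module,
then `S` is coherent.

(The `R`-module structure on `I = ker f` is pinned down by `hcompat` to be the one
induced along `f` from the `S`-module structure; it exists since `I² = 0`.) -/
theorem statement_8
    (S R : Type*) [CommRing S] [CommRing R]
    (f : S →+* R) (hf : Function.Surjective f)
    (hsq : (RingHom.ker f) ^ 2 = ⊥)
    [Module R (RingHom.ker f)]
    (hcompat : ∀ (s : S) (x : RingHom.ker f), f s • x = s • x)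
    (hR : IsCoherentRing R)
    (hker : Module.FinitePresentation R (RingHom.ker f)) :
    IsCoherentRing S :=
  statement_8_general S R f hf hcompat hR hker
end

section
/- Let R be a commutative ring and f ∈ R a non-zero-divisor. Assume the pair (R, f) satisfies the Artin–Rees property: for every inclusion M ⊆ N of finitely generated R-modules, the restriction to M of the f-adic topology on N equals the f-adic topology of M (i.e., for every n ≥ 1 there exists m ≥ 1 with M ∩ f^mN ⊆ f^nM). If R[1/f] and R/fR are coherent, then R is coherent. -/
/-!
Present a finitely generated ideal as the image of `π : Rⁿ → R`; we must show `ker π` is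
finitely generated. Since `R[1/f]` is coherent, the localized kernel is finitely generated,
so there is a finitely generated `K ≤ ker π` such that every element of `ker π` lands in `K`
after multiplication by a power of `f`. Artin–Rees gives `m` with `K ∩ fᵐ Rⁿ ⊆ f K`; as `f` is
a non-zero-divisor this lets one lower exponents down to `m`, so `ker π = (K : fᵐ)`.
Finally, coherence of `R/fR` makes `(Z : f)` finitely generated for every finitely generated
`Z ≤ Rⁿ`: multiplication by `f` identifies it with `Z ∩ f Rⁿ`, the kernel of `Z → (R/fR)ⁿ`,
whose image is finitely presented over `R/fR`, hence over `R`.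
-/

universe u

open Submodule LinearMap

section PseudoCoherent

variable {R : Type*} [CommRing R]
  {M' M M'' : Type*} [AddCommGroup M'] [Module R M'] [AddCommGroup M] [Module R M]
  [AddCommGroup M''] [Module R M'']

lemma Module.finitePresentation_of_injective_of_exact [Module.FinitePresentation R M']
    [Module.FinitePresentation R M''] (i : M' →ₗ[R] M) (p : M →ₗ[R] M'')
    (hi : Function.Injective i) (hp : Function.Surjective p) (H : Function.Exact i p) :
    Module.FinitePresentation R M :=
  have : Module.FinitePresentation R (ker p) :=
    .of_equiv ((LinearEquiv.ofInjective i hi).trans (.ofEq _ _ (exact_iff.mp H).symm))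
  Module.finitePresentation_of_ker p hp

lemma Module.Finite.of_injective_of_exact [Module.Finite R M] [Module.FinitePresentation R M'']
    (i : M' →ₗ[R] M) (p : M →ₗ[R] M'') (hi : Function.Injective i)
    (hp : Function.Surjective p) (H : Function.Exact i p) :
    Module.Finite R M' := by
  have : Module.Finite R (LinearMap.range i) := Module.Finite.iff_fg.mpr <|
    exact_iff.mp H ▸ Module.FinitePresentation.fg_ker p hp
  exact .equiv (LinearEquiv.ofInjective i hi).symm

variable (R M) in
/-- Bourbaki's *pseudo-coherent* modules: a coherent module is a finite pseudo-coherent one. -/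
def Module.IsPseudoCoherent : Prop :=
  ∀ N : Submodule R M, N.FG → Module.FinitePresentation R N

namespace Module.IsPseudoCoherent

lemma of_linearEquiv (e : M ≃ₗ[R] M') (hM : IsPseudoCoherent R M) : IsPseudoCoherent R M' :=
  fun Z hZ ↦
    have := hM (Z.map e.symm.toLinearMap) (hZ.map _)
    .of_equiv (e.symm.submoduleMap Z).symm

lemma of_exact (i : M' →ₗ[R] M) (p : M →ₗ[R] M'') (hi : Function.Injective i)
    (H : Function.Exact i p) (h' : IsPseudoCoherent R M') (h'' : IsPseudoCoherent R M'') :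
    IsPseudoCoherent R M := by
  intro Z hZ
  have : Module.Finite R Z := Module.Finite.iff_fg.mpr hZ
  have : Module.FinitePresentation R (Z.map p) := h'' _ (hZ.map p)
  let i' : Z.comap i →ₗ[R] Z := i.restrict fun _ hx ↦ hx
  let p' : Z →ₗ[R] Z.map p := p.restrict fun _ hx ↦ mem_map_of_mem hx
  have hi' : Function.Injective i' := fun x y hxy ↦ Subtype.ext (hi congr($hxy.1))
  have hp' : Function.Surjective p' := by
    rintro ⟨_, x, hx, rfl⟩
    exact ⟨⟨x, hx⟩, rfl⟩
  have H' : Function.Exact i' p' := by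
    rintro ⟨x, hx⟩
    constructor
    · intro h
      obtain ⟨y, rfl⟩ := (H x).mp congr($h.1)
      exact ⟨⟨y, hx⟩, rfl⟩
    · rintro ⟨⟨y, hy⟩, hyx⟩
      cases hyx
      exact Subtype.ext (H.apply_apply_eq_zero y)
  have : Module.Finite R (Z.comap i) := .of_injective_of_exact i' p' hi' hp' H'
  have : Module.FinitePresentation R (Z.comap i) := h' _ (Module.Finite.iff_fg.mp this)
  exact Module.finitePresentation_of_injective_of_exact i' p' hi' hp' H'

lemma prod (h' : IsPseudoCoherent R M') (h : IsPseudoCoherent R M) :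
    IsPseudoCoherent R (M' × M) :=
  of_exact _ _ LinearMap.inl_injective Function.Exact.inl_snd h' h

end Module.IsPseudoCoherent

lemma IsCoherentRing.isPseudoCoherent_pi (hR : IsCoherentRing R) :
    ∀ n : ℕ, Module.IsPseudoCoherent R (Fin n → R)
  | 0 => fun _ _ ↦ inferInstance
  | n + 1 => (Module.IsPseudoCoherent.prod hR (hR.isPseudoCoherent_pi n)).of_linearEquiv
      (Fin.consLinearEquiv R fun _ ↦ R)

end PseudoCoherent

section Quotient

variable {R : Type*} [CommRing R]

lemma Module.IsPseudoCoherent.restrictScalars {B N : Type*} [CommRing B] [Algebra R B]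
    [Module.FinitePresentation R B] (hB : Function.Surjective (algebraMap R B))
    [AddCommGroup N] [Module B N] [Module R N] [IsScalarTower R B N]
    (hN : IsPseudoCoherent B N) : IsPseudoCoherent R N := by
  rintro Z ⟨s, rfl⟩
  have : Module.FinitePresentation B (span B (s : Set N)) := hN _ (fg_span s.finite_toSet)
  have : Module.FinitePresentation R (span B (s : Set N)) := .trans R _ B
  rw [← restrictScalars_span R B hB]
  exact this

lemma Module.IsPseudoCoherent.fg_inf_ker {M N : Type*} [AddCommGroup M] [Module R M]
    [AddCommGroup N] [Module R N] (hN : IsPseudoCoherent R N) (g : M →ₗ[R] N)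
    {Z : Submodule R M} (hZ : Z.FG) : (Z ⊓ ker g).FG := by
  have : Module.Finite R Z := Module.Finite.iff_fg.mpr hZ
  have : Module.FinitePresentation R (Z.map g) := hN _ (hZ.map g)
  let g' : Z →ₗ[R] Z.map g := g.restrict fun _ hx ↦ mem_map_of_mem hx
  have hg' : Function.Surjective g' := by
    rintro ⟨_, x, hx, rfl⟩
    exact ⟨⟨x, hx⟩, rfl⟩
  have := (Module.FinitePresentation.fg_ker g' hg').map Z.subtype
  rwa [ker_restrict, map_comap_subtype] at this

lemma ker_compLeft_algebraMap_quotient_span_singleton (f : R) (n : ℕ) :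
    ker ((Algebra.linearMap R (R ⧸ Ideal.span {f})).compLeft (Fin n)) =
      range (lsmul R (Fin n → R) f) := by
  ext x
  simp only [mem_ker, mem_range, funext_iff, compLeft_apply, Function.comp_apply,
    Algebra.linearMap_apply, Ideal.Quotient.algebraMap_eq, Pi.zero_apply,
    Ideal.Quotient.eq_zero_iff_mem, Ideal.mem_span_singleton', lsmul_apply, Pi.smul_apply,
    smul_eq_mul]
  constructor
  · intro h
    choose y hy using h
    exact ⟨y, fun i ↦ by rw [mul_comm, hy]⟩
  · rintro ⟨y, hy⟩ i
    exact ⟨y i, by rw [mul_comm, hy]⟩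

lemma IsCoherentRing.fg_comap_lsmul {f : R} (hf : IsSMulRegular R f)
    (hR : IsCoherentRing (R ⧸ Ideal.span {f})) {n : ℕ} {Z : Submodule R (Fin n → R)}
    (hZ : Z.FG) : (Z.comap (lsmul R (Fin n → R) f)).FG := by
  have : Module.FinitePresentation R (R ⧸ Ideal.span {f}) :=
    Module.finitePresentation_of_surjective _ (Ideal.span {f}).mkQ_surjective
      (by rw [ker_mkQ]; exact fg_span_singleton f)
  have hfg := ((hR.isPseudoCoherent_pi n).restrictScalars
    Ideal.Quotient.mk_surjective).fg_inf_ker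
    ((Algebra.linearMap R (R ⧸ Ideal.span {f})).compLeft (Fin n)) hZ
  have hinj : Function.Injective (lsmul R (Fin n → R) f) := IsSMulRegular.pi fun _ ↦ hf
  refine fg_of_fg_map_injective _ hinj ?_
  rwa [map_comap_eq, inf_comm, ← ker_compLeft_algebraMap_quotient_span_singleton]

lemma IsCoherentRing.fg_comap_lsmul_pow {f : R} (hf : IsSMulRegular R f)
    (hR : IsCoherentRing (R ⧸ Ideal.span {f})) {n : ℕ} {Z : Submodule R (Fin n → R)}
    (hZ : Z.FG) (m : ℕ) : (Z.comap (lsmul R (Fin n → R) (f ^ m))).FG := by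
  induction m with
  | zero =>
    rwa [pow_zero, show lsmul R (Fin n → R) 1 = .id from LinearMap.ext (one_smul R), comap_id]
  | succ m ih =>
    have : lsmul R (Fin n → R) (f ^ (m + 1)) = lsmul R _ (f ^ m) ∘ₗ lsmul R _ f :=
      LinearMap.ext fun x ↦ by simp only [comp_apply, lsmul_apply, pow_succ, mul_smul]
    rw [this, comap_comp]
    exact hR.fg_comap_lsmul hf ih

end Quotient

section Localization

variable {R : Type*} [CommRing R]

lemma Submodule.exists_fg_le_smul_mem_of_fg_localized' {S : Submonoid R} (A : Type*)
    [CommRing A] [Algebra R A] [IsLocalization S A] {M M' : Type*} [AddCommGroup M] [Module R M]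
    [AddCommGroup M'] [Module R M'] [Module A M'] [IsScalarTower R A M'] (φ : M →ₗ[R] M')
    [IsLocalizedModule S φ] {N : Submodule R M} (hN : (N.localized' A S φ).FG) :
    ∃ K ≤ N, K.FG ∧ ∀ x ∈ N, ∃ s ∈ S, s • x ∈ K := by
  obtain ⟨t, ht⟩ := hN
  have hnum : ∀ y ∈ t, ∃ m ∈ N, ∃ s : S, IsLocalizedModule.mk' φ m s = y :=
    fun y hy ↦ (mem_localized' ..).mp (ht ▸ subset_span hy)
  choose m hmN s hs using hnum
  let K := span R (Set.range fun y : t ↦ m y y.2)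
  refine ⟨K, span_le.mpr (Set.range_subset_iff.mpr fun y ↦ hmN y y.2),
    fg_span (Set.finite_range _), fun x hx ↦ ?_⟩
  have hle : N.localized' A S φ ≤ K.localized' A S φ := by
    rw [← ht, span_le]
    intro y hy
    exact ⟨m y hy, subset_span ⟨⟨y, hy⟩, rfl⟩, s y hy, hs y hy⟩
  obtain ⟨k, hk, u, hku⟩ := hle ⟨x, hx, 1, rfl⟩
  obtain ⟨c, hc⟩ := (IsLocalizedModule.mk'_eq_mk'_iff φ k x u 1).mp hku
  refine ⟨c * u, (c * u).2, ?_⟩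
  rw [one_smul] at hc
  rw [mul_smul, ← Submonoid.smul_def, ← Submonoid.smul_def, hc]
  exact K.smul_mem _ hk

lemma IsCoherentRing.fg_ker (hR : IsCoherentRing R) {M : Type*} [AddCommGroup M] [Module R M]
    [Module.Finite R M] (g : M →ₗ[R] R) : (ker g).FG := by
  have : Module.FinitePresentation R (range g) := hR _ (fg_range g)
  simpa using Module.FinitePresentation.fg_ker g.rangeRestrict g.surjective_rangeRestrict

end Localization

section ArtinRees

variable {R M : Type*} [CommRing R] [AddCommGroup M] [Module R M] {f : R}

lemma Submodule.pow_smul_mem_of_artinRees (hf : IsSMulRegular M f) {K : Submodule R M} {m : ℕ}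
    (hAR : K ⊓ (Ideal.span {f ^ m} • ⊤) ≤ Ideal.span {f} • K) {x : M} (e : ℕ)
    (hx : f ^ (m + e) • x ∈ K) : f ^ m • x ∈ K := by
  induction e with
  | zero => simpa using hx
  | succ e ih =>
    have htop : f ^ (m + (e + 1)) • x ∈ Ideal.span {f ^ m} • (⊤ : Submodule R M) := by
      rw [ideal_span_singleton_smul, pow_add, mul_smul]
      exact smul_mem_pointwise_smul _ _ _ mem_top
    have hfK := hAR ⟨hx, htop⟩
    rw [ideal_span_singleton_smul, mem_smul_pointwise_iff_exists] at hfK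
    obtain ⟨k, hk, hfk⟩ := hfK
    refine ih ?_
    have hk' : k = f ^ (m + e) • x :=
      hf <| show f • k = f • _ by rw [hfk, smul_smul, ← pow_succ', add_assoc]
    rwa [← hk']

lemma Submodule.eq_comap_lsmul_pow_of_artinRees (hf : IsSMulRegular M f) {K N : Submodule R M}
    {m : ℕ} (hAR : K ⊓ (Ideal.span {f ^ m} • ⊤) ≤ Ideal.span {f} • K) (hKN : K ≤ N)
    (hsat : ∀ x ∈ N, ∃ s ∈ Submonoid.powers f, s • x ∈ K)
    (hN : ∀ x, f ^ m • x ∈ N → x ∈ N) : N = K.comap (lsmul R M (f ^ m)) := by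
  refine le_antisymm (fun x hx ↦ ?_) fun x hx ↦ hN x (hKN hx)
  obtain ⟨_, ⟨e, rfl⟩, he⟩ := hsat x hx
  refine pow_smul_mem_of_artinRees hf hAR e ?_
  rw [pow_add, mul_smul]
  exact K.smul_mem _ he

end ArtinRees

/-- Let `R` be a commutative ring and `f ∈ R` a non-zero-divisor.
Assume the pair `(R, f)` satisfies the Artin–Rees property: for every inclusion
`M ⊆ N` of finitely generated `R`-modules and every `n` there exists `m` with
`M ∩ f^m N ⊆ f^n M`.  If `R[1/f]` and `R/fR` are coherent, then `R` is coherent. -/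
theorem statement_9
    (R : Type u) [CommRing R] (f : R) (hf : f ∈ nonZeroDivisors R)
    (hAR : ∀ (N : Type u) [AddCommGroup N] [Module R N], Module.Finite R N →
      ∀ M : Submodule R N, M.FG → ∀ n : ℕ, ∃ m : ℕ,
        M ⊓ (Ideal.span {f ^ m} • (⊤ : Submodule R N)) ≤ Ideal.span {f ^ n} • M)
    (h1 : IsCoherentRing (Localization.Away f))
    (h2 : IsCoherentRing (R ⧸ Ideal.span {f})) :
    IsCoherentRing R := by
  intro I hI
  have : Module.Finite R I := Module.Finite.iff_fg.mpr hI
  obtain ⟨n, π, hπ⟩ := Module.Finite.exists_fin' R I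
  let g := I.subtype ∘ₗ π
  have hker : ker g = ker π := ker_comp_of_ker_eq_bot _ I.ker_subtype
  refine Module.finitePresentation_of_surjective π hπ (hker ▸ ?_)
  have hreg : IsSMulRegular R f := (isRegular_iff_mem_nonZeroDivisors.mpr hf).left.isSMulRegular
  let Φ : (Fin n → R) →ₗ[R] Fin n → Localization.Away f :=
    .pi fun i ↦ Algebra.linearMap R (Localization.Away f) ∘ₗ proj i
  have hloc : ((ker g).localized' (Localization.Away f) (.powers f) Φ).FG := by
    rw [localized'_ker_eq_ker_localizedMap _ _ Φ (Algebra.linearMap R (Localization.Away f))]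
    exact h1.fg_ker _
  obtain ⟨K, hKg, hK, hsat⟩ := exists_fg_le_smul_mem_of_fg_localized' _ Φ hloc
  obtain ⟨m, hm⟩ := hAR _ inferInstance K hK 1
  rw [pow_one] at hm
  rw [eq_comap_lsmul_pow_of_artinRees (IsSMulRegular.pi fun _ ↦ hreg) hm hKg hsat
    fun x hx ↦ (hreg.pow m) (by simpa using hx)]
  exact h2.fg_comap_lsmul_pow hreg hK m
end

section
/- Let A be a commutative ring and r ≥ 1. Then for all s ≥ 1: [p]^{2s}·W_r(A) ⊆ p^s·W_r(A), p^{rs}·W_r(A) ⊆ W_r(pA)^s, and W_r(pA)^{p^r s} ⊆ [p]^s·W_r(A). In particular, the [p]-adic, W_r(pA)-adic, and p-adic topologies on W_r(A) coincide. -/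
section TruncatedWittVectorMap

variable {p : ℕ} [hp : Fact p.Prime] {R S : Type*} [CommRing R] [CommRing S]

private def twMapFun (n : ℕ) (g : R →+* S) (x : TruncatedWittVector p n R) :
    TruncatedWittVector p n S :=
  TruncatedWittVector.mk p (fun i => g (x.coeff i))

private lemma twMapFun_truncate (n : ℕ) (g : R →+* S) (w : WittVector p R) :
    twMapFun n g (WittVector.truncate n w) = WittVector.truncate n (WittVector.map g w) := by
  ext i
  simp [twMapFun, WittVector.coeff_truncate, WittVector.map_coeff]

/-- Functoriality of truncated Witt vectors: a ring homomorphism `R →+* S` induces a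
ring homomorphism `W_n(R) →+* W_n(S)`, acting coefficientwise. -/
noncomputable def truncatedWittVectorMap (n : ℕ) (g : R →+* S) :
    TruncatedWittVector p n R →+* TruncatedWittVector p n S where
  toFun := twMapFun n g
  map_one' := by
    show twMapFun n g 1 = 1
    rw [show (1 : TruncatedWittVector p n R) = WittVector.truncate n 1 from (map_one _).symm,
      twMapFun_truncate, map_one, map_one]
  map_mul' x y := by
    show twMapFun n g (x * y) = twMapFun n g x * twMapFun n g y
    obtain ⟨a, ha⟩ := WittVector.truncate_surjective p n R x
    obtain ⟨b, hb⟩ := WittVector.truncate_surjective p n R y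
    rw [← ha, ← hb, ← map_mul, twMapFun_truncate, twMapFun_truncate, twMapFun_truncate,
      map_mul, map_mul]
  map_zero' := by
    show twMapFun n g 0 = 0
    rw [show (0 : TruncatedWittVector p n R) = WittVector.truncate n 0 from (map_zero _).symm,
      twMapFun_truncate, map_zero, map_zero]
  map_add' x y := by
    show twMapFun n g (x + y) = twMapFun n g x + twMapFun n g y
    obtain ⟨a, ha⟩ := WittVector.truncate_surjective p n R x
    obtain ⟨b, hb⟩ := WittVector.truncate_surjective p n R y
    rw [← ha, ← hb, ← map_add, twMapFun_truncate, twMapFun_truncate, twMapFun_truncate,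
      map_add, map_add]

end TruncatedWittVectorMap

noncomputable section

variable {p : ℕ} [Fact p.Prime] {A : Type*} [CommRing A]

/-- The Teichmüller lift `A → W_r(A)`, `a ↦ [a]`. -/
def teich (r : ℕ) (a : A) : TruncatedWittVector p r A :=
  WittVector.truncate r (WittVector.teichmuller p a)

/-- For an ideal `J ⊆ A`, the ideal `W_r(J) := ker (W_r(A) → W_r(A/J))`. -/
def wittIdeal (r : ℕ) (J : Ideal A) : Ideal (TruncatedWittVector p r A) :=
  RingHom.ker (truncatedWittVectorMap (p := p) r (Ideal.Quotient.mk J))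

end

/-!
Write `p = [p] + V η` in `W(A)`. Then `[p] = p - V η`, and `(V η)² = V(η · F V η) = p · V(η²)`
shows `p ∣ [p]²`. Modulo `p` the Witt vector `p ^ r` has vanishing first `r` coordinates, so
`p ^ r ∈ W_r(pA)`. Finally `W_r(I)` is spanned by the truncations of `V^j [a]`, `a ∈ I`; the
identity `V^i [a] · V^(i+k) [b] = p^i · V^(i+k) [a^(p^k) b]` shows that `W_r(I)^n` lies in the span
of the `V^j [a]` with `a ∈ I^n`, and `V^j [p^(p^j m) d] = V^j [d] · [p]^m` puts those with
`a ∈ (p)^(p^r s)` and `j < r` into `[p]^s · W_r(A)`, while those with `j ≥ r` vanish.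
-/

namespace WittVector

open Function

variable {p : ℕ} [hp : Fact p.Prime] {R : Type*} [CommRing R]

local notation "𝕎" => WittVector p

/- `F [a] = [a ^ p]` is checked on ghost components over `ℚ`-algebras and transported to arbitrary
rings through `MvPolynomial R ℤ`, as in the proof of `teichmuller_mul`. -/
private theorem frobenius_teichmuller_rat {σ : Type*} (x : MvPolynomial σ ℚ) :
    frobenius (teichmuller p x) = teichmuller p (x ^ p) := by
  apply (ghostMap.bijective_of_invertible p (MvPolynomial σ ℚ)).1
  ext1 n
  simp only [ghostMap_apply, ghostComponent_frobenius, ghostComponent_teichmuller, ← pow_mul,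
    pow_succ']

private theorem frobenius_teichmuller_int {σ : Type*} (x : MvPolynomial σ ℤ) :
    frobenius (teichmuller p x) = teichmuller p (x ^ p) := by
  refine map_injective (MvPolynomial.map (Int.castRingHom ℚ))
    (MvPolynomial.map_injective _ Int.cast_injective) ?_
  rw [(frobenius_isPoly p).map, map_teichmuller, map_teichmuller, frobenius_teichmuller_rat,
    map_pow (MvPolynomial.map (Int.castRingHom ℚ))]

theorem frobenius_teichmuller (a : R) : frobenius (teichmuller p a) = teichmuller p (a ^ p) := by
  obtain ⟨x, rfl⟩ := MvPolynomial.counit_surjective R a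
  rw [← map_teichmuller, ← (frobenius_isPoly p).map, frobenius_teichmuller_int, map_teichmuller,
    map_pow]

theorem iterate_frobenius_teichmuller (k : ℕ) (a : R) :
    frobenius^[k] (teichmuller p a) = teichmuller p (a ^ p ^ k) := by
  induction k generalizing a with
  | zero => simp
  | succ k ih => rw [iterate_succ_apply, frobenius_teichmuller, ih, ← pow_mul, pow_succ']

theorem iterate_frobenius_natCast (k n : ℕ) : frobenius^[k] (n : 𝕎 R) = n :=
  iterate_fixed (map_natCast _ n) k

theorem iterate_frobenius_iterate_verschiebung (x : 𝕎 R) (n : ℕ) :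
    frobenius^[n] (verschiebung^[n] x) = x * (p : 𝕎 R) ^ n := by
  induction n generalizing x with
  | zero => simp
  | succ n ih =>
    rw [iterate_succ_apply' frobenius, iterate_succ_apply, ih, map_mul, frobenius_verschiebung,
      map_pow, map_natCast, mul_assoc, ← pow_succ']

theorem iterate_verschiebung_mul_natCast_pow (x : 𝕎 R) (i : ℕ) :
    verschiebung^[i] (x * (p : 𝕎 R) ^ i) = verschiebung^[i] x * (p : 𝕎 R) ^ i := by
  rw [iterate_verschiebung_mul_left, ← Nat.cast_pow, iterate_frobenius_natCast]

theorem teichmuller_mul_iterate_verschiebung_teichmuller (k : ℕ) (a b : R) :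
    teichmuller p a * verschiebung^[k] (teichmuller p b) =
      verschiebung^[k] (teichmuller p (a ^ p ^ k * b)) := by
  rw [mul_comm, iterate_verschiebung_mul_left, iterate_frobenius_teichmuller, ← map_mul, mul_comm]

theorem iterate_verschiebung_teichmuller_mul (i k : ℕ) (a b : R) :
    verschiebung^[i] (teichmuller p a) * verschiebung^[i + k] (teichmuller p b) =
      verschiebung^[i + k] (teichmuller p (a ^ p ^ k * b)) * (p : 𝕎 R) ^ i := by
  rw [iterate_verschiebung_mul_left, iterate_add_apply, iterate_frobenius_iterate_verschiebung,
    ← mul_assoc, teichmuller_mul_iterate_verschiebung_teichmuller,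
    iterate_verschiebung_mul_natCast_pow, iterate_add_apply]

theorem iterate_verschiebung_teichmuller_pow_mul (j m : ℕ) (π d : R) :
    verschiebung^[j] (teichmuller p (π ^ (p ^ j * m) * d)) =
      verschiebung^[j] (teichmuller p d) * teichmuller p π ^ m := by
  rw [pow_mul', map_mul, ← iterate_frobenius_teichmuller, mul_comm,
    ← iterate_verschiebung_mul_left, map_pow]

theorem truncate_iterate_verschiebung_of_le {n j : ℕ} (h : n ≤ j) (x : 𝕎 R) :
    truncate n (verschiebung^[j] x) = 0 :=
  (mem_ker_truncate n _).2 fun _ hi => iterate_verschiebung_coeff_eq_zero x (hi.trans_le h)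

theorem iterate_verschiebung_teichmuller_coeff (i n : ℕ) (a : R) :
    (verschiebung^[i] (teichmuller p a)).coeff n = if n = i then a else 0 := by
  rcases lt_trichotomy n i with h | rfl | h
  · rw [iterate_verschiebung_coeff_eq_zero _ h, if_neg h.ne]
  · simpa using iterate_verschiebung_coeff (teichmuller p a) n 0
  · obtain ⟨k, rfl⟩ := Nat.exists_eq_add_of_lt h
    rw [show i + k + 1 = (k + 1) + i by omega, iterate_verschiebung_coeff,
      teichmuller_coeff_pos _ _ _ k.succ_pos, if_neg (by omega)]

theorem truncate_eq_sum_iterate_verschiebung_teichmuller (n : ℕ) (x : 𝕎 R) :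
    truncate n x =
      ∑ i ∈ Finset.range n, truncate n (verschiebung^[i] (teichmuller p (x.coeff i))) := by
  rw [← map_sum]
  ext j
  have hsub (m : ℕ) : Subsingleton {i | i ∈ Finset.range n ∧
      (verschiebung^[i] (teichmuller p (x.coeff i))).coeff m ≠ 0} := by
    refine ⟨fun a b => Subtype.ext ?_⟩
    have index_eq (i : ℕ) (hi : (verschiebung^[i] (teichmuller p (x.coeff i))).coeff m ≠ 0) :
        i = m := by
      by_contra hne
      exact hi (by rw [iterate_verschiebung_teichmuller_coeff, if_neg (Ne.symm hne)])
    rw [index_eq a a.2.2, index_eq b b.2.2]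
  rw [coeff_truncate, coeff_truncate, sum_coeff_eq_coeff_sum _ hsub]
  simp [iterate_verschiebung_teichmuller_coeff]

theorem exists_eq_teichmuller_add_verschiebung (x : 𝕎 R) :
    ∃ y, x = teichmuller p (x.coeff 0) + verschiebung y := by
  obtain ⟨y, hy⟩ : ∃ y, x - teichmuller p (x.coeff 0) = verschiebung^[1] y :=
    ⟨_, eq_iterate_verschiebung fun i hi => by
      obtain rfl : i = 0 := by omega
      simpa using map_sub constantCoeff x (teichmuller p (x.coeff 0))⟩
  exact ⟨y, by rw [← iterate_one verschiebung, ← hy, add_sub_cancel]⟩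

theorem natCast_dvd_teichmuller_natCast_sq : (p : 𝕎 R) ∣ teichmuller p (p : R) ^ 2 := by
  obtain ⟨η, hη⟩ := exists_eq_teichmuller_add_verschiebung (p : 𝕎 R)
  have hcoeff : (p : 𝕎 R).coeff 0 = p := map_natCast constantCoeff p
  have hsq : verschiebung η * verschiebung η = verschiebung (η * η) * p := by
    rw [← verschiebung_mul_frobenius, frobenius_verschiebung, ← verschiebung_mul_frobenius,
      map_natCast, mul_assoc]
  rw [hcoeff] at hη
  refine ⟨p - 2 * verschiebung η + verschiebung (η * η), ?_⟩
  rw [show teichmuller p (p : R) = p - verschiebung η by rw [hη]; ring]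
  linear_combination hsq

theorem natCast_pow_coeff_eq_zero (hR : (p : R) = 0) {i k : ℕ} (h : i < k) :
    ((p : 𝕎 R) ^ k).coeff i = 0 := by
  cases subsingleton_or_nontrivial R
  · exact Subsingleton.elim _ _
  · have := (CharP.charP_iff_prime_eq_zero hp.out).2 hR
    exact coeff_p_pow_eq_zero p R h.ne

end WittVector

section Truncated

open WittVector

variable {p : ℕ} [Fact p.Prime] {A : Type*} [CommRing A]

theorem coeff_truncatedWittVectorMap {S : Type*} [CommRing S] (n : ℕ) (g : A →+* S)
    (x : TruncatedWittVector p n A) (i : Fin n) :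
    (truncatedWittVectorMap n g x).coeff i = g (x.coeff i) :=
  rfl

theorem mem_wittIdeal_iff {r : ℕ} {J : Ideal A} {x : TruncatedWittVector p r A} :
    x ∈ wittIdeal r J ↔ ∀ i, x.coeff i ∈ J := by
  simp only [wittIdeal, RingHom.mem_ker, TruncatedWittVector.ext_iff,
    coeff_truncatedWittVectorMap, TruncatedWittVector.coeff_zero, Ideal.Quotient.eq_zero_iff_mem]

theorem natCast_pow_mem_wittIdeal (r : ℕ) {J : Ideal A} (hJ : (p : A) ∈ J) :
    (p : TruncatedWittVector p r A) ^ r ∈ wittIdeal r J := by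
  have hpJ : (p : A ⧸ J) = 0 := by
    rw [← map_natCast (Ideal.Quotient.mk J), Ideal.Quotient.eq_zero_iff_mem]
    exact hJ
  rw [wittIdeal, RingHom.mem_ker, map_pow, map_natCast, ← map_natCast (truncate r), ← map_pow,
    ← RingHom.mem_ker, mem_ker_truncate]
  exact fun i hi => natCast_pow_coeff_eq_zero hpJ hi

variable (p) in
noncomputable def verschiebungTeichmullerSpan (r : ℕ) (I : Ideal A) :
    Ideal (TruncatedWittVector p r A) :=
  Ideal.span {truncate r (verschiebung^[j] (teichmuller p a)) | (j : ℕ) (a ∈ I)}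

theorem wittIdeal_le_verschiebungTeichmullerSpan (r : ℕ) (I : Ideal A) :
    wittIdeal r I ≤ verschiebungTeichmullerSpan p r I := by
  intro x hx
  obtain ⟨w, rfl⟩ := truncate_surjective p r A x
  rw [truncate_eq_sum_iterate_verschiebung_teichmuller]
  refine Ideal.sum_mem _ fun i hi => Ideal.subset_span ⟨i, w.coeff i, ?_, rfl⟩
  simpa [coeff_truncate] using mem_wittIdeal_iff.1 hx ⟨i, Finset.mem_range.1 hi⟩

theorem truncate_iterate_verschiebung_teichmuller_mul_mem (r : ℕ) {I J : Ideal A} {a b : A}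
    (ha : a ∈ I) (hb : b ∈ J) (i k : ℕ) :
    truncate r (verschiebung^[i] (teichmuller p a) * verschiebung^[i + k] (teichmuller p b)) ∈
      verschiebungTeichmullerSpan p r (I * J) := by
  rw [iterate_verschiebung_teichmuller_mul, map_mul]
  refine Ideal.mul_mem_right _ _ (Ideal.subset_span ⟨i + k, _, Ideal.mul_mem_mul ?_ hb, rfl⟩)
  exact Ideal.pow_mem_of_mem I ha _ (pow_pos (Fact.out : p.Prime).pos k)

theorem verschiebungTeichmullerSpan_mul_le (r : ℕ) (I J : Ideal A) :
    verschiebungTeichmullerSpan p r I * verschiebungTeichmullerSpan p r J ≤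
      verschiebungTeichmullerSpan p r (I * J) := by
  rw [verschiebungTeichmullerSpan, verschiebungTeichmullerSpan, Ideal.span_mul_span',
    Ideal.span_le]
  rintro _ ⟨_, ⟨i, a, ha, rfl⟩, _, ⟨j, b, hb, rfl⟩, rfl⟩
  dsimp only
  rw [SetLike.mem_coe, ← map_mul]
  rcases le_total i j with h | h
  · obtain ⟨k, rfl⟩ := Nat.exists_eq_add_of_le h
    exact truncate_iterate_verschiebung_teichmuller_mul_mem r ha hb i k
  · obtain ⟨k, rfl⟩ := Nat.exists_eq_add_of_le h
    rw [mul_comm I J, mul_comm (verschiebung^[j + k] _)]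
    exact truncate_iterate_verschiebung_teichmuller_mul_mem r hb ha j k

theorem verschiebungTeichmullerSpan_pow_le (r : ℕ) (I : Ideal A) (n : ℕ) :
    verschiebungTeichmullerSpan p r I ^ n ≤ verschiebungTeichmullerSpan p r (I ^ n) := by
  induction n with
  | zero =>
    rw [pow_zero, pow_zero, Ideal.one_eq_top, top_le_iff, Ideal.eq_top_iff_one]
    exact Ideal.subset_span ⟨0, 1, by simp, by simp⟩
  | succ n ih =>
    rw [pow_succ, pow_succ]
    exact (Ideal.mul_mono_left ih).trans (verschiebungTeichmullerSpan_mul_le r _ _)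

theorem verschiebungTeichmullerSpan_span_pow_le (r : ℕ) (π : A) (s : ℕ) :
    verschiebungTeichmullerSpan p r (Ideal.span {π} ^ (p ^ r * s)) ≤
      Ideal.span {teich r π} ^ s := by
  rw [verschiebungTeichmullerSpan, Ideal.span_le, Ideal.span_singleton_pow,
    Ideal.span_singleton_pow]
  rintro _ ⟨j, a, ha, rfl⟩
  obtain ⟨d, rfl⟩ := Ideal.mem_span_singleton.1 ha
  rw [SetLike.mem_coe, Ideal.mem_span_singleton]
  rcases lt_or_ge j r with hj | hj
  · have hexp : p ^ r * s = p ^ j * (p ^ (r - j) * s) := by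
      rw [← mul_assoc, ← pow_add, Nat.add_sub_cancel' hj.le]
    have hs : s ≤ p ^ (r - j) * s :=
      Nat.le_mul_of_pos_left s (pow_pos (Fact.out : p.Prime).pos _)
    rw [hexp, iterate_verschiebung_teichmuller_pow_mul, map_mul, map_pow]
    exact Dvd.dvd.mul_left (pow_dvd_pow _ hs) _
  · rw [truncate_iterate_verschiebung_of_le hj]
    exact dvd_zero _

end Truncated

theorem statement_13_general
    (p : ℕ) [Fact p.Prime] (A : Type*) [CommRing A]
    (r : ℕ) (s : ℕ) :
    (Ideal.span {teich (p := p) (A := A) r p}) ^ (2 * s)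
        ≤ (Ideal.span {(p : TruncatedWittVector p r A)}) ^ s ∧
    (Ideal.span {(p : TruncatedWittVector p r A)}) ^ (r * s)
        ≤ (wittIdeal (p := p) r (Ideal.span {(p : A)})) ^ s ∧
    (wittIdeal (p := p) r (Ideal.span {(p : A)})) ^ (p ^ r * s)
        ≤ (Ideal.span {teich (p := p) (A := A) r p}) ^ s := by
  refine ⟨?_, ?_, ?_⟩
  · have h : (p : TruncatedWittVector p r A) ∣ teich r (p : A) ^ 2 := by
      have := map_dvd (WittVector.truncate r)
        (WittVector.natCast_dvd_teichmuller_natCast_sq (p := p) (R := A))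
      rwa [map_natCast, map_pow] at this
    rw [Ideal.span_singleton_pow, Ideal.span_singleton_pow, Ideal.span_singleton_le_span_singleton,
      pow_mul]
    exact pow_dvd_pow_of_dvd h s
  · rw [Ideal.span_singleton_pow, Ideal.span_singleton_le_iff_mem, pow_mul]
    exact Ideal.pow_mem_pow (natCast_pow_mem_wittIdeal r (Ideal.mem_span_singleton_self _)) s
  · calc wittIdeal r (Ideal.span {(p : A)}) ^ (p ^ r * s)
        ≤ verschiebungTeichmullerSpan p r (Ideal.span {(p : A)}) ^ (p ^ r * s) :=
          Ideal.pow_right_mono (wittIdeal_le_verschiebungTeichmullerSpan r _) _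
      _ ≤ verschiebungTeichmullerSpan p r (Ideal.span {(p : A)} ^ (p ^ r * s)) :=
          verschiebungTeichmullerSpan_pow_le r _ _
      _ ≤ Ideal.span {teich r (p : A)} ^ s := verschiebungTeichmullerSpan_span_pow_le r _ s

/-- Let `A` be a commutative ring and `r ≥ 1`.  Then for all
`s ≥ 1`:
`[p]^{2s}·W_r(A) ⊆ p^s·W_r(A)`, `p^{rs}·W_r(A) ⊆ W_r(pA)^s`, and
`W_r(pA)^{p^r·s} ⊆ [p]^s·W_r(A)`.
(In particular, the `[p]`-adic, `W_r(pA)`-adic and `p`-adic topologies on `W_r(A)`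
coincide.) -/
theorem statement_13
    (p : ℕ) [Fact p.Prime] (A : Type*) [CommRing A]
    (r : ℕ) (hr : 1 ≤ r) (s : ℕ) (hs : 1 ≤ s) :
    (Ideal.span {teich (p := p) (A := A) r p}) ^ (2 * s)
        ≤ (Ideal.span {(p : TruncatedWittVector p r A)}) ^ s ∧
    (Ideal.span {(p : TruncatedWittVector p r A)}) ^ (r * s)
        ≤ (wittIdeal (p := p) r (Ideal.span {(p : A)})) ^ s ∧
    (wittIdeal (p := p) r (Ideal.span {(p : A)})) ^ (p ^ r * s)
        ≤ (Ideal.span {teich (p := p) (A := A) r p}) ^ s :=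
  statement_13_general p A r s
end

section
/- Let A be a commutative ring, I ⊆ A an ideal, and f ∈ I a non-zero-divisor. Let M be an A-module such that neither M nor M/fM contains a nonzero element annihilated by I. Let α : M → N be a map of A-modules whose kernel and cokernel are annihilated by I. Then the induced map M/M[f] → N/N[f] is an isomorphism, where M[f] = {x ∈ M : fx = 0} and N[f] = {y ∈ N : fy = 0} denote the f-torsion submodules. -/
/-!
Since `M` has no `I`-torsion and `ker α` is `I`-torsion, `α` is injective, which gives
injectivity on `M/M[f]`. For surjectivity, pick `x` with `α x = f • y`. For each `a ∈ I`
write `a • y = α w`; injectivity of `α` turns `f • a • y = a • f • y` into `a • x = f • w`,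
so the class of `x` in `M/fM` is killed by `I`, hence `x = f • z`, and then `z` maps to
the class of `y` in `N/N[f]`.
-/

open Function

namespace Submodule

variable {A M N : Type*} [CommRing A] [AddCommGroup M] [Module A M] [AddCommGroup N]
  [Module A N]

lemma mem_ideal_span_singleton_smul_top_iff {f : A} {x : M} :
    x ∈ Ideal.span {f} • (⊤ : Submodule A M) ↔ ∃ z, f • z = x := by
  simp [ideal_span_singleton_smul, mem_smul_pointwise_iff_exists]

lemma torsionBy_le_comap_torsionBy (f : A) (α : M →ₗ[A] N) :
    torsionBy A M f ≤ (torsionBy A N f).comap α := fun x hx => by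
  simp only [mem_comap, mem_torsionBy_iff] at hx ⊢
  rw [← map_smul, hx, map_zero]

lemma mapQ_torsionBy_injective {f : A} {α : M →ₗ[A] N} (hα : Injective α) :
    Injective (mapQ _ _ α (torsionBy_le_comap_torsionBy f α)) := by
  rw [← LinearMap.ker_eq_bot, eq_bot_iff]
  rintro x hx
  obtain ⟨m, rfl⟩ := Quotient.mk_surjective _ x
  rw [LinearMap.mem_ker, mapQ_apply, Quotient.mk_eq_zero, mem_torsionBy_iff] at hx
  rw [mem_bot, Quotient.mk_eq_zero, mem_torsionBy_iff]
  exact hα (by rw [map_smul, hx, map_zero])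

lemma mapQ_torsionBy_surjective {f : A} {α : M →ₗ[A] N}
    (h : ∀ y : N, ∃ z : M, α (f • z) = f • y) :
    Surjective (mapQ _ _ α (torsionBy_le_comap_torsionBy f α)) := by
  intro y
  obtain ⟨n, rfl⟩ := Quotient.mk_surjective _ y
  obtain ⟨z, hz⟩ := h n
  refine ⟨Quotient.mk z, ?_⟩
  rw [mapQ_apply, Quotient.eq, mem_torsionBy_iff, smul_sub, ← map_smul, hz, sub_self]

end Submodule

namespace LinearMap

variable {A M N : Type*} [CommRing A] [AddCommGroup M] [Module A M] [AddCommGroup N]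
  [Module A N] {I : Ideal A} {α : M →ₗ[A] N}

lemma injective_of_ker_smul_eq_zero (hM : ∀ x : M, (∀ a ∈ I, a • x = 0) → x = 0)
    (hker : ∀ a ∈ I, ∀ x ∈ ker α, a • x = 0) : Injective α := by
  rw [← ker_eq_bot, Submodule.eq_bot_iff]
  exact fun x hx => hM x fun a ha => hker a ha x hx

lemma mem_ideal_span_singleton_smul_top_of_apply_eq_smul {f : A}
    (hMf : ∀ x : M ⧸ (Ideal.span {f} • (⊤ : Submodule A M)), (∀ a ∈ I, a • x = 0) → x = 0)
    (hα : Injective α) (hcoker : ∀ a ∈ I, ∀ y : N, a • y ∈ range α)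
    {x : M} {y : N} (hxy : α x = f • y) :
    x ∈ Ideal.span {f} • (⊤ : Submodule A M) := by
  rw [← Submodule.Quotient.mk_eq_zero]
  refine hMf _ fun a ha => ?_
  obtain ⟨w, hw⟩ := hcoker a ha y
  have hax : a • x = f • w := hα (by rw [map_smul, map_smul, hw, hxy, smul_comm])
  rw [← Submodule.Quotient.mk_smul, Submodule.Quotient.mk_eq_zero, hax,
    Submodule.mem_ideal_span_singleton_smul_top_iff]
  exact ⟨w, rfl⟩

end LinearMap

/-- Let `A` be a commutative ring, `I ⊆ A` an ideal, and `f ∈ I` a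
non-zero-divisor.  Let `M` be an `A`-module such that neither `M` nor `M/fM` contains a
nonzero element annihilated by `I`.  Let `α : M → N` be a map of `A`-modules whose
kernel and cokernel are annihilated by `I`.  Then the induced map
`M/M[f] → N/N[f]` is an isomorphism, where `M[f]`, `N[f]` are the `f`-torsion
submodules. -/
theorem statement_18
    (A : Type*) [CommRing A] (I : Ideal A) (f : A)
    (hfI : f ∈ I)
    (M N : Type*) [AddCommGroup M] [Module A M] [AddCommGroup N] [Module A N]
    (hM : ∀ x : M, (∀ a ∈ I, a • x = 0) → x = 0)
    (hMf : ∀ x : M ⧸ (Ideal.span {f} • (⊤ : Submodule A M)), (∀ a ∈ I, a • x = 0) → x = 0)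
    (α : M →ₗ[A] N)
    (hker : ∀ a ∈ I, ∀ x ∈ LinearMap.ker α, a • x = 0)
    (hcoker : ∀ a ∈ I, ∀ y : N, a • y ∈ LinearMap.range α) :
    Function.Bijective
      (Submodule.mapQ (Submodule.torsionBy A M f) (Submodule.torsionBy A N f) α
        (fun x hx => by
          simp only [Submodule.mem_comap, Submodule.mem_torsionBy_iff] at hx ⊢
          rw [← map_smul, hx, map_zero])) := by
  have hα : Injective α := LinearMap.injective_of_ker_smul_eq_zero hM hker
  refine ⟨Submodule.mapQ_torsionBy_injective hα, Submodule.mapQ_torsionBy_surjective fun y => ?_⟩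
  obtain ⟨x, hx⟩ := hcoker f hfI y
  obtain ⟨z, rfl⟩ := Submodule.mem_ideal_span_singleton_smul_top_iff.mp <|
    LinearMap.mem_ideal_span_singleton_smul_top_of_apply_eq_smul hMf hα hcoker hx
  exact ⟨z, hx⟩
end
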